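/- Let G be an m×m real symmetric matrix with spectral decomposition G = Q Λ Qᵀ, where Q is orthogonal and Λ = diag(λ₁,…,λ_m). Then the matrix exponential map exp : Matrix(m,m,ℝ) → Matrix(m,m,ℝ) is Fréchet differentiable at G, and its derivative applied to any m×m real matrix H equals Q (Φ ∘ (Qᵀ H Q)) Qᵀ, where ∘ denotes the Hadamard (entrywise) product and Φ is the m×m matrix with entries Φ_{jk} = e^{λ_j} if λ_j = λ_k and Φ_{jk} = (e^{λ_j} − e^{λ_k})/(λ_j − λ_k) if λ_j ≠ λ_k. -/

import Mathlib

/-!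
Conjugating by the orthogonal `Q` reduces the claim to the derivative `L := D exp(Λ)` at the
diagonal matrix `Λ`, which exists because `exp` is analytic on the Banach algebra of matrices.
Differentiating `exp X * X = X * exp X` at `Λ` gives
`(λⱼ - λₖ) (L K)ⱼₖ = (e^{λⱼ} - e^{λₖ}) Kⱼₖ`, which settles the entries with `λⱼ ≠ λₖ`.
When `λⱼ = λₖ = μ`, differentiating `exp (2X) = exp X * exp X` at `sΛ` shows that
`s ↦ e^{-sμ} (D exp(sΛ) K)ⱼₖ` takes the same value at `s` and `s / 2`; being continuous, it is
constant, and its value at `s = 0` is `Kⱼₖ`.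
-/

open Matrix NormedSpace Filter Topology

theorem eq_apply_zero_of_apply_mul_eq {X : Type*} [TopologicalSpace X] [T2Space X]
    {f : ℝ → X} (hf : ContinuousAt f 0) {c : ℝ} (hc : |c| < 1) (h : ∀ x, f (c * x) = f x)
    (x : ℝ) : f x = f 0 := by
  have h_iter : ∀ n : ℕ, f (c ^ n * x) = f x := by
    intro n
    induction n with
    | zero => simp
    | succ n ih => rw [pow_succ', mul_assoc, h, ih]
  have h_lim : Tendsto (fun n : ℕ => f (c ^ n * x)) atTop (𝓝 (f 0)) := by
    refine hf.tendsto.comp ?_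
    simpa using (tendsto_pow_atTop_nhds_zero_of_abs_lt_one hc).mul_const x
  exact tendsto_nhds_unique (by simpa only [h_iter] using tendsto_const_nhds) h_lim

section BanachAlgebra

variable {𝕂 𝔸 : Type*} [RCLike 𝕂] [NormedRing 𝔸] [NormedAlgebra 𝕂 𝔸] [CompleteSpace 𝔸]

theorem hasFDerivAt_exp_fderiv (a : 𝔸) : HasFDerivAt exp (fderiv 𝕂 exp a) a :=
  (exp_analytic a).differentiableAt.hasFDerivAt

variable (𝕂) in
theorem continuous_fderiv_exp : Continuous (fderiv 𝕂 (exp : 𝔸 → 𝔸)) :=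
  (contDiff_iff_contDiffAt.2 fun a => (exp_analytic (𝕂 := 𝕂) a).contDiffAt).continuous_fderiv
    (n := 1) one_ne_zero

/-- Derivative of `exp x * x = x * exp x`. -/
theorem exp_mul_add_fderiv_exp_mul [NormedAlgebra ℚ 𝔸] (a k : 𝔸) :
    exp a * k + fderiv 𝕂 exp a k * a = a * fderiv 𝕂 exp a k + k * exp a := by
  have h_left := (hasFDerivAt_exp_fderiv (𝕂 := 𝕂) a).mul' (hasFDerivAt_id a)
  have h_right := (hasFDerivAt_id a).mul' (hasFDerivAt_exp_fderiv (𝕂 := 𝕂) a)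
  rw [show (exp * id : 𝔸 → 𝔸) = id * exp from funext fun x => (Commute.refl x).exp_left.eq]
    at h_left
  simpa using DFunLike.congr_fun (h_left.unique h_right) k

/-- Derivative of `exp (2 • x) = exp x * exp x`. -/
theorem two_smul_fderiv_exp_two_smul [NormedAlgebra ℚ 𝔸] (a k : 𝔸) :
    (2 : 𝕂) • fderiv 𝕂 exp ((2 : 𝕂) • a) k
      = exp a * fderiv 𝕂 exp a k + fderiv 𝕂 exp a k * exp a := by
  have h_left := (hasFDerivAt_exp_fderiv ((2 : 𝕂) • a)).comp a
    ((hasFDerivAt_id (𝕜 := 𝕂) a).const_smul (2 : 𝕂))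
  have h_right := (hasFDerivAt_exp_fderiv (𝕂 := 𝕂) a).mul' (hasFDerivAt_exp_fderiv a)
  rw [show (exp ∘ ((2 : 𝕂) • ·) : 𝔸 → 𝔸) = exp * exp from funext fun x => by
    simp [two_smul, exp_add_of_commute (Commute.refl x)]] at h_left
  simpa using DFunLike.congr_fun (h_left.unique h_right) k

theorem hasFDerivAt_exp_units_conj [NormedAlgebra ℚ 𝔸] (u : 𝔸ˣ) (a : 𝔸) :
    HasFDerivAt exp
      ((ContinuousLinearMap.mulLeftRight 𝕂 𝔸 u ↑u⁻¹).comp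
        ((fderiv 𝕂 exp a).comp (ContinuousLinearMap.mulLeftRight 𝕂 𝔸 ↑u⁻¹ u)))
      (u * a * ↑u⁻¹) := by
  have h_exp : HasFDerivAt exp (fderiv 𝕂 exp a) (↑u⁻¹ * (u * a * ↑u⁻¹) * u : 𝔸) := by
    simpa [mul_assoc] using hasFDerivAt_exp_fderiv (𝕂 := 𝕂) a
  refine ((ContinuousLinearMap.mulLeftRight 𝕂 𝔸 u ↑u⁻¹).hasFDerivAt.comp _
    (HasFDerivAt.comp (f := ContinuousLinearMap.mulLeftRight 𝕂 𝔸 ↑u⁻¹ u) _ h_exp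
      (ContinuousLinearMap.mulLeftRight 𝕂 𝔸 ↑u⁻¹ u).hasFDerivAt)).congr_of_eventuallyEq
    (.of_eq (funext fun x => ?_))
  simp only [Function.comp_apply, ContinuousLinearMap.mulLeftRight_apply,
    NormedSpace.exp_units_conj']
  simp [mul_assoc]

end BanachAlgebra

noncomputable def expDividedDiff {n : Type*} (d : n → ℝ) : Matrix n n ℝ :=
  of fun i j => if d i = d j then Real.exp (d i) else (Real.exp (d i) - Real.exp (d j)) / (d i - d j)

section LinftyOpNorm

attribute [local instance] Matrix.linftyOpNormedRing Matrix.linftyOpNormedAlgebra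

variable {n : Type*} [Fintype n] [DecidableEq n]

theorem exp_diagonal_real (d : n → ℝ) : exp (diagonal d) = diagonal fun i => Real.exp (d i) := by
  rw [exp_diagonal, Pi.exp_def, Real.exp_eq_exp_ℝ]

theorem fderiv_exp_diagonal_apply_of_ne (d : n → ℝ) (K : Matrix n n ℝ) {i j : n}
    (h : d i ≠ d j) :
    fderiv ℝ exp (diagonal d) K i j
      = (Real.exp (d i) - Real.exp (d j)) / (d i - d j) * K i j := by
  have h_comm : exp (diagonal d) * K + fderiv ℝ exp (diagonal d) K * diagonal d
      = diagonal d * fderiv ℝ exp (diagonal d) K + K * exp (diagonal d) :=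
    exp_mul_add_fderiv_exp_mul _ _
  have h_entry := congr_fun₂ h_comm i j
  simp only [exp_diagonal_real, Matrix.add_apply, mul_diagonal, diagonal_mul] at h_entry
  rw [div_mul_eq_mul_div, eq_div_iff (sub_ne_zero.2 h)]
  linear_combination -h_entry

theorem fderiv_exp_two_smul_diagonal_apply_of_eq (d : n → ℝ) (K : Matrix n n ℝ) {i j : n}
    (h : d i = d j) :
    fderiv ℝ exp (diagonal ((2 : ℝ) • d)) K i j
      = Real.exp (d i) * fderiv ℝ exp (diagonal d) K i j := by
  have h_sq : (2 : ℝ) • fderiv ℝ exp ((2 : ℝ) • diagonal d) K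
      = exp (diagonal d) * fderiv ℝ exp (diagonal d) K
        + fderiv ℝ exp (diagonal d) K * exp (diagonal d) :=
    two_smul_fderiv_exp_two_smul _ _
  have h_entry := congr_fun₂ h_sq i j
  simp only [← diagonal_smul, exp_diagonal_real, Matrix.smul_apply, Matrix.add_apply,
    mul_diagonal, diagonal_mul, smul_eq_mul, ← h] at h_entry
  linear_combination h_entry / 2

theorem fderiv_exp_diagonal_apply_of_eq (d : n → ℝ) (K : Matrix n n ℝ) {i j : n}
    (h : d i = d j) :
    fderiv ℝ exp (diagonal d) K i j = Real.exp (d i) * K i j := by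
  set g : ℝ → ℝ := fun s => Real.exp (-(s * d i)) * fderiv ℝ exp (diagonal (s • d)) K i j
  have hg_cont : Continuous g := by
    have h_fderiv : Continuous fun s : ℝ => fderiv ℝ exp (diagonal (s • d)) :=
      (continuous_fderiv_exp ℝ).comp (continuous_id.smul continuous_const).matrix_diagonal
    fun_prop
  have hg_half : ∀ s, g ((1 / 2) * s) = g s := by
    intro s
    have h_double := fderiv_exp_two_smul_diagonal_apply_of_eq (((1 / 2) * s) • d) K
      (i := i) (j := j) (by simp [h])
    rw [smul_smul, show (2 : ℝ) * (1 / 2 * s) = s by ring] at h_double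
    simp only [g, h_double, Pi.smul_apply, smul_eq_mul, ← mul_assoc, ← Real.exp_add]
    ring_nf
  have hg_zero : g 0 = K i j := by
    have h_fderiv_zero : fderiv ℝ exp (0 : Matrix n n ℝ) = 1 := hasFDerivAt_exp_zero.fderiv
    simp [g, h_fderiv_zero]
  have hg_one := eq_apply_zero_of_apply_mul_eq hg_cont.continuousAt (c := 1 / 2) (by norm_num)
    hg_half 1
  rw [hg_zero] at hg_one
  simpa [g, Real.exp_neg, inv_mul_eq_iff_eq_mul₀ (Real.exp_pos _).ne'] using hg_one

theorem fderiv_exp_diagonal (d : n → ℝ) (K : Matrix n n ℝ) :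
    fderiv ℝ exp (diagonal d) K = expDividedDiff d ⊙ K := by
  ext i j
  by_cases h : d i = d j
  · simp [fderiv_exp_diagonal_apply_of_eq d K h, expDividedDiff, h]
  · simp [fderiv_exp_diagonal_apply_of_ne d K h, expDividedDiff, h]

theorem hasFDerivAt_exp_conj_diagonal {Q : Matrix n n ℝ} (hQ : Qᵀ * Q = 1) (d : n → ℝ) :
    HasFDerivAt exp
      ((ContinuousLinearMap.mulLeftRight ℝ _ Q Qᵀ).comp
        ((fderiv ℝ exp (diagonal d)).comp (ContinuousLinearMap.mulLeftRight ℝ _ Qᵀ Q)))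
      (Q * diagonal d * Qᵀ) :=
  hasFDerivAt_exp_units_conj ⟨Q, Qᵀ, mul_eq_one_comm.mp hQ, hQ⟩ (diagonal d)

theorem fderiv_exp_conj_diagonal_apply {Q : Matrix n n ℝ} (hQ : Qᵀ * Q = 1) (d : n → ℝ)
    (H : Matrix n n ℝ) :
    fderiv ℝ exp (Q * diagonal d * Qᵀ) H = Q * (expDividedDiff d ⊙ (Qᵀ * H * Q)) * Qᵀ := by
  have h_fderiv : fderiv ℝ exp (Q * diagonal d * Qᵀ) = _ :=
    (hasFDerivAt_exp_conj_diagonal hQ d).fderiv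
  rw [h_fderiv]
  show Q * fderiv ℝ exp (diagonal d) (Qᵀ * H * Q) * Qᵀ = _
  rw [fderiv_exp_diagonal]

end LinftyOpNorm

attribute [local instance] Matrix.normedAddCommGroup Matrix.normedSpace

/-- The matrix exponential is Fréchet differentiable at a symmetric matrix `G = Q Λ Qᵀ`, with
derivative `H ↦ Q (Φ ∘ (Qᵀ H Q)) Qᵀ`, where `∘` is the Hadamard product and `Φ` is the matrix
of divided differences of the scalar exponential at the eigenvalues of `G`. -/
theorem matrix_exp_fderiv_daleckii_krein
    {m : ℕ} (G Q : Matrix (Fin m) (Fin m) ℝ) (lam : Fin m → ℝ)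
    (hQ : Qᵀ * Q = 1) (hG : G = Q * Matrix.diagonal lam * Qᵀ) :
    ∃ D : Matrix (Fin m) (Fin m) ℝ →L[ℝ] Matrix (Fin m) (Fin m) ℝ,
      HasFDerivAt (exp : Matrix (Fin m) (Fin m) ℝ → Matrix (Fin m) (Fin m) ℝ) D G
      ∧ ∀ H : Matrix (Fin m) (Fin m) ℝ,
          D H = Q * (Matrix.hadamard
              (Matrix.of fun j k : Fin m =>
                if lam j = lam k then Real.exp (lam j)
                else (Real.exp (lam j) - Real.exp (lam k)) / (lam j - lam k))
              (Qᵀ * H * Q)) * Qᵀ := by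
  subst hG
  -- `HasFDerivAt` only depends on the topology, and the sup norm of the statement and the
  -- `ℓ∞`-operator norm used above induce the same product topology definitionally.
  exact ⟨_, (hasFDerivAt_exp_conj_diagonal hQ lam).differentiableAt.hasFDerivAt,
    fderiv_exp_conj_diagonal_apply hQ lam⟩
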